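/- arXiv:2210.04355 — 5 statements merged into one kernel-verified Lean document; each statement's English description precedes it below -/
import Mathlib

section
/- Let $a_k(x) = A_k x + b_k$ be a sequence of affine maps $\mathbb{R}^d \to \mathbb{R}^d$ (with $A_k$ a $d\times d$ matrix and $b_k \in \mathbb{R}^d$). Then, up to a subsequence, exactly one of the following holds: either $\sup_k \sup_{|x| \le 1} |a_k(x)| < +\infty$, or $|a_k(x)| \to +\infty$ for Lebesgue-a.e.\ $x \in \mathbb{R}^d$. -/
/-!
Encode the affine map `x ↦ T x + c` by the pair `(T, c)`. If a subsequence of these pairs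
stays bounded, the maps are uniformly bounded on the unit ball, which has positive measure, so
they cannot diverge almost everywhere. Otherwise the pairs tend to infinity; normalizing them and
extracting a convergent subsequence gives a limit `(T, c) ≠ 0`, whose zero set
`{x | T x + c = 0}` lies in a proper affine subspace. Off that null set the original maps grow
like the norms of the pairs, and a uniform bound on the unit ball would bound those norms.
-/

open MeasureTheory Filter Metric Topology

section

variable {P F : Type*} [NormedAddCommGroup P] [NormedSpace ℝ P]
  [NormedAddCommGroup F] [NormedSpace ℝ F]

theorem exists_subseq_tendsto_inv_norm_smul [ProperSpace P] (p : ℕ → P)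
    (hp : Tendsto (fun k => ‖p k‖) atTop atTop) :
    ∃ ψ : ℕ → ℕ, StrictMono ψ ∧ ∃ q : P, ‖q‖ = 1 ∧
      Tendsto (fun k => ‖p (ψ k)‖⁻¹ • p (ψ k)) atTop (𝓝 q) := by
  have hball : ∀ k, ‖p k‖⁻¹ • p k ∈ closedBall (0 : P) 1 := fun k => by
    rw [mem_closedBall_zero_iff, norm_smul, norm_inv, norm_norm]
    exact inv_mul_le_one
  obtain ⟨q, -, ψ, hψ, hconv⟩ := (isCompact_closedBall (0 : P) 1).tendsto_subseq hball
  have hunit : ∀ᶠ k in atTop, 1 = ‖‖p (ψ k)‖⁻¹ • p (ψ k)‖ := by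
    filter_upwards [(hp.comp hψ.tendsto_atTop).eventually_gt_atTop 0] with k hk
    exact (norm_smul_inv_norm (norm_pos_iff.mp hk)).symm
  exact ⟨ψ, hψ, q, tendsto_nhds_unique hconv.norm (tendsto_const_nhds.congr' hunit), hconv⟩

theorem tendsto_norm_apply_atTop_of_tendsto_inv_norm_smul (Λ : P →L[ℝ] F) {p : ℕ → P}
    (hp : Tendsto (fun k => ‖p k‖) atTop atTop) {q : P}
    (hq : Tendsto (fun k => ‖p k‖⁻¹ • p k) atTop (𝓝 q)) (hΛ : Λ q ≠ 0) :
    Tendsto (fun k => ‖Λ (p k)‖) atTop atTop := by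
  refine (hp.atTop_mul_pos (norm_pos_iff.mpr hΛ) ((Λ.continuous.tendsto q).comp hq).norm).congr' ?_
  filter_upwards [hp.eventually_gt_atTop 0] with k hk
  simp only [Function.comp_apply, map_smul, norm_smul, norm_inv, norm_norm]
  exact mul_inv_cancel_left₀ hk.ne' _

end

theorem not_ae_tendsto_atTop_of_forall_norm_le_one {E : Type*} [NormedAddCommGroup E]
    [MeasurableSpace E] [OpensMeasurableSpace E] (μ : Measure E) [μ.IsOpenPosMeasure]
    (f : ℕ → E → ℝ) {C : ℝ} (h : ∀ k x, ‖x‖ ≤ 1 → f k x ≤ C) :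
    ¬ ∀ᵐ x ∂μ, Tendsto (fun k => f k x) atTop atTop := by
  intro hae
  have hball : closedBall (0 : E) 1 ⊆ {x | ¬ Tendsto (fun k => f k x) atTop atTop} := by
    intro x hx htends
    obtain ⟨k, hk⟩ := (htends.eventually_gt_atTop C).exists
    exact (h k x (mem_closedBall_zero_iff.mp hx)).not_gt hk
  exact (measure_closedBall_pos μ 0 one_pos).ne' (measure_mono_null hball (ae_iff.mp hae))

section

variable {E F : Type*} [NormedAddCommGroup E] [NormedSpace ℝ E]
  [NormedAddCommGroup F] [NormedSpace ℝ F]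

theorem norm_apply_add_le_two_mul_norm_prod (T : E →L[ℝ] F) (c : F) {x : E} (hx : ‖x‖ ≤ 1) :
    ‖T x + c‖ ≤ 2 * ‖(T, c)‖ :=
  calc ‖T x + c‖ ≤ ‖T‖ + ‖c‖ := norm_add_le_of_le (T.unit_le_opNorm x hx) le_rfl
    _ ≤ 2 * ‖(T, c)‖ := by
      linarith [norm_fst_le (T, c), norm_snd_le (T, c)]

theorem norm_prod_le_two_mul_of_forall_norm_le_one (T : E →L[ℝ] F) (c : F) {C : ℝ}
    (h : ∀ x : E, ‖x‖ ≤ 1 → ‖T x + c‖ ≤ C) : ‖(T, c)‖ ≤ 2 * C := by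
  have hc : ‖c‖ ≤ C := by simpa using h 0 (by simp)
  have hT : ‖T‖ ≤ 2 * C := by
    refine T.opNorm_le_of_unit_norm (by linarith [norm_nonneg c]) fun x hx => ?_
    calc ‖T x‖ = ‖(T x + c) - c‖ := by rw [add_sub_cancel_right]
      _ ≤ ‖T x + c‖ + ‖c‖ := norm_sub_le _ _
      _ ≤ 2 * C := by linarith [h x hx.le]
  exact norm_prod_le_iff.mpr ⟨hT, by linarith [norm_nonneg c]⟩

theorem ae_apply_add_ne_zero [MeasurableSpace E] [BorelSpace E] [FiniteDimensional ℝ E]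
    (μ : Measure E) [μ.IsAddHaarMeasure] {T : E →L[ℝ] F} {c : F} (h : (T, c) ≠ 0) :
    ∀ᵐ x ∂μ, T x + c ≠ 0 := by
  refine ae_iff.mpr ?_
  simp only [ne_eq, not_not]
  rcases Set.eq_empty_or_nonempty {x | T x + c = 0} with hempty | ⟨x₀, hx₀⟩
  · simp [hempty]
  rw [Set.mem_ofPred_eq] at hx₀
  have hzero : {x | T x + c = 0} = (· + -x₀) ⁻¹' (LinearMap.ker (T : E →ₗ[ℝ] F) : Set E) := by
    ext x
    simp only [Set.mem_ofPred_eq, Set.mem_preimage, SetLike.mem_coe, LinearMap.mem_ker,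
      ContinuousLinearMap.coe_coe, map_add, map_neg]
    constructor <;> intro hx
    · linear_combination (norm := module) hx - hx₀
    · linear_combination (norm := module) hx + hx₀
  have hker : LinearMap.ker (T : E →ₗ[ℝ] F) ≠ ⊤ := by
    intro htop
    have hT : T = 0 := ContinuousLinearMap.coe_injective (LinearMap.ker_eq_top.mp htop)
    have hc : c = 0 := by simpa [hT] using hx₀
    exact h (by simp [hT, hc])
  rw [hzero, measure_preimage_add_right]
  exact Measure.addHaar_submodule μ _ hker

noncomputable def affineEval (x : E) : (E →L[ℝ] F) × F →L[ℝ] F :=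
  (ContinuousLinearMap.apply ℝ F x).coprod (ContinuousLinearMap.id ℝ F)

@[simp]
theorem affineEval_apply (x : E) (T : E →L[ℝ] F) (c : F) : affineEval x (T, c) = T x + c := rfl

theorem exists_subseq_ae_tendsto_norm_apply_add_atTop [MeasurableSpace E] [BorelSpace E]
    [FiniteDimensional ℝ E] [FiniteDimensional ℝ F] (μ : Measure E) [μ.IsAddHaarMeasure]
    (T : ℕ → E →L[ℝ] F) (c : ℕ → F) (h : Tendsto (fun k => ‖(T k, c k)‖) atTop atTop) :
    ∃ ψ : ℕ → ℕ, StrictMono ψ ∧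
      ∀ᵐ x ∂μ, Tendsto (fun k => ‖T (ψ k) x + c (ψ k)‖) atTop atTop := by
  obtain ⟨ψ, hψ, q, hq, hconv⟩ := exists_subseq_tendsto_inv_norm_smul (fun k => (T k, c k)) h
  have hq0 : (q.1, q.2) ≠ 0 := by simp [← norm_ne_zero_iff, hq]
  refine ⟨ψ, hψ, ?_⟩
  filter_upwards [ae_apply_add_ne_zero μ hq0] with x hx
  exact tendsto_norm_apply_atTop_of_tendsto_inv_norm_smul (affineEval x)
    (h.comp hψ.tendsto_atTop) hconv hx

end

/-- Dichotomy for sequences of affine maps: up to a subsequence, either they are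
uniformly bounded on the unit ball, or they diverge to infinity a.e. -/
theorem affine_dichotomy (d : ℕ)
    (L : ℕ → (EuclideanSpace ℝ (Fin d)) →ₗ[ℝ] EuclideanSpace ℝ (Fin d))
    (b : ℕ → EuclideanSpace ℝ (Fin d)) :
    ∃ φ : ℕ → ℕ, StrictMono φ ∧
      Xor' (∃ C : ℝ, ∀ k : ℕ, ∀ x : EuclideanSpace ℝ (Fin d), ‖x‖ ≤ 1 →
              ‖L (φ k) x + b (φ k)‖ ≤ C)
           (∀ᵐ x ∂(volume : Measure (EuclideanSpace ℝ (Fin d))),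
              Tendsto (fun k => ‖L (φ k) x + b (φ k)‖) atTop atTop) := by
  let T k := (L k).toContinuousLinearMap
  by_cases hdiv : Tendsto (fun k => ‖(T k, b k)‖) atTop atTop
  · obtain ⟨φ, hφ, hae⟩ := exists_subseq_ae_tendsto_norm_apply_add_atTop volume T b hdiv
    refine ⟨φ, hφ, Or.inr ⟨hae, fun ⟨C, hC⟩ => ?_⟩⟩
    obtain ⟨k, hk⟩ := ((hdiv.comp hφ.tendsto_atTop).eventually_gt_atTop (2 * C)).exists
    exact hk.not_ge (norm_prod_le_two_mul_of_forall_norm_le_one _ _ (hC k))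
  · obtain ⟨C, hC⟩ : ∃ C, ∃ᶠ k in atTop, ‖(T k, b k)‖ ≤ C := by
      simp only [Filter.tendsto_atTop, not_forall, not_eventually, not_le] at hdiv
      exact hdiv.imp fun C hC => hC.mono fun _ => le_of_lt
    obtain ⟨φ, hφ, hφC⟩ := extraction_of_frequently_atTop hC
    have hbdd : ∀ k x, ‖x‖ ≤ 1 → ‖T (φ k) x + b (φ k)‖ ≤ 2 * C := fun k x hx =>
      (norm_apply_add_le_two_mul_norm_prod _ _ hx).trans (by linarith [hφC k])
    exact ⟨φ, hφ, Or.inl ⟨⟨2 * C, hbdd⟩, not_ae_tendsto_atTop_of_forall_norm_le_one volume _ hbdd⟩⟩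
end

section
/- Let $\Omega \subset \mathbb{R}^d$ be a bounded open set and let $(f_k)_k$ be a sequence of measurable functions $\Omega \to \mathbb{R}^m$ converging pointwise Lebesgue-a.e.\ to a function $f$. Then there exists a nondecreasing function $\psi_0 : [0,\infty) \to [0,\infty)$ with $\lim_{s\to+\infty}\psi_0(s) = +\infty$ such that $\sup_k \int_\Omega \psi_0(|f_k(x)|)\,dx < +\infty$. -/
open MeasureTheory Filter Set
open scoped ENNReal Topology

/-!
A sequence converging a.e. is bounded a.e., so on a set of finite measure its tails
`μ {t < |f_k|}` are uniformly small: they are dominated by the tails of `sup_k |f_k|`.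
Choosing thresholds `t_j` with `μ {t_j < |f_k|} ≤ 2⁻ʲ` for every `k`, the counting function
`ψ₀ s = #{j | t_j < s}` diverges, and `∫ ψ₀ (|f_k|) ≤ ∑_j μ {t_j < |f_k|} ≤ 2`.
-/

section ThresholdCount

variable {α : Type*} [MeasurableSpace α] {μ : Measure α}

theorem tendsto_measure_setOf_lt_atTop [IsFiniteMeasure μ] {H : α → ℝ} (hH : AEMeasurable H μ) :
    Tendsto (fun t : ℝ => μ {x | t < H x}) atTop (𝓝 0) := by
  have hanti : Antitone fun t : ℝ => {x | t < H x} := fun a b hab x hx => hab.trans_lt hx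
  have hempty : ⋂ t : ℝ, {x | t < H x} = ∅ :=
    eq_empty_of_forall_notMem fun x hx => lt_irrefl (H x) (mem_iInter.1 hx (H x))
  have h := tendsto_measure_iInter_atTop
    (fun t => nullMeasurableSet_lt aemeasurable_const hH) hanti ⟨0, measure_ne_top μ _⟩
  rwa [hempty, measure_empty] at h

theorem exists_forall_measure_setOf_lt_le_of_ae_bddAbove [IsFiniteMeasure μ] {ι : Type*}
    [Countable ι] {g : ι → α → ℝ} (hg : ∀ i, AEMeasurable (g i) μ)
    (hbdd : ∀ᵐ x ∂μ, BddAbove (range fun i => g i x)) {ε : ℝ≥0∞} (hε : ε ≠ 0) :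
    ∃ t : ℝ, ∀ i, μ {x | t < g i x} ≤ ε := by
  obtain ⟨t, ht⟩ := ((tendsto_measure_setOf_lt_atTop (AEMeasurable.iSup hg)).eventually
    (ge_mem_nhds (pos_iff_ne_zero.2 hε))).exists
  refine ⟨t, fun i => (measure_mono_ae ?_).trans ht⟩
  filter_upwards [hbdd] with x hx hlt
  exact lt_of_lt_of_le hlt (le_ciSup hx i)

/-- Truncating at `⌈s⌉₊` keeps the count finite whatever the thresholds `t`. -/
noncomputable def thresholdCount (t : ℕ → ℝ) (s : ℝ) : ℕ :=
  ((Finset.range ⌈s⌉₊).filter fun j => t j < s).card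

theorem thresholdCount_mono (t : ℕ → ℝ) : Monotone (thresholdCount t) := fun _ _ hab =>
  Finset.card_le_card <|
    (Finset.filter_subset_filter _ (Finset.range_subset_range.2 (Nat.ceil_mono hab))).trans
      (Finset.monotone_filter_right _ fun _ _ h => h.trans_le hab)

theorem tendsto_thresholdCount (t : ℕ → ℝ) : Tendsto (thresholdCount t) atTop atTop := by
  refine tendsto_atTop.2 fun n => ?_
  filter_upwards [eventually_ge_atTop (n : ℝ),
    (Finset.range n).eventually_all.2 fun j _ => eventually_gt_atTop (t j)] with s hns hts
  have hn : n ≤ ⌈s⌉₊ := by exact_mod_cast hns.trans (Nat.le_ceil s)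
  calc n = (Finset.range n).card := (Finset.card_range n).symm
    _ ≤ thresholdCount t s := Finset.card_le_card fun j hj =>
        Finset.mem_filter.2 ⟨Finset.range_subset_range.2 hn hj, hts j hj⟩

theorem lintegral_thresholdCount_le (t : ℕ → ℝ) {g : α → ℝ} (hg : AEMeasurable g μ) :
    ∫⁻ x, thresholdCount t (g x) ∂μ ≤ ∑' j, μ {x | t j < g x} := by
  have hs : ∀ j, NullMeasurableSet {x | t j < g x} μ := fun j =>
    nullMeasurableSet_lt aemeasurable_const hg
  have hcount : ∀ x, (thresholdCount t (g x) : ℝ≥0∞) ≤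
      ∑' j, {x | t j < g x}.indicator 1 x := fun x =>
    calc (thresholdCount t (g x) : ℝ≥0∞)
        = ∑ j ∈ Finset.range ⌈g x⌉₊, {x | t j < g x}.indicator 1 x := by
          rw [thresholdCount, Finset.card_filter, Nat.cast_sum]
          refine Finset.sum_congr rfl fun j _ => ?_
          by_cases h : t j < g x <;> simp [h]
      _ ≤ _ := ENNReal.sum_le_tsum _
  calc ∫⁻ x, thresholdCount t (g x) ∂μ
      ≤ ∫⁻ x, ∑' j, {x | t j < g x}.indicator 1 x ∂μ := lintegral_mono hcount
    _ = ∑' j, μ {x | t j < g x} := by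
      rw [lintegral_tsum (f := fun j => {x | t j < g x}.indicator 1) fun j =>
        aemeasurable_one.indicator₀ (hs j)]
      exact tsum_congr fun j => lintegral_indicator_one₀ (hs j)

theorem exists_tendsto_lintegral_le_of_uniform_tail {ι : Type*} {g : ι → α → ℝ}
    (hg : ∀ i, AEMeasurable (g i) μ)
    (htail : ∀ ε : ℝ≥0∞, ε ≠ 0 → ∃ t : ℝ, ∀ i, μ {x | t < g i x} ≤ ε) :
    ∃ ψ : ℝ → ℕ, Monotone ψ ∧ Tendsto ψ atTop atTop ∧ ∀ i, ∫⁻ x, ψ (g i x) ∂μ ≤ 2 := by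
  choose t ht using fun j : ℕ => htail ((2⁻¹ : ℝ≥0∞) ^ j) (by simp)
  refine ⟨thresholdCount t, thresholdCount_mono t, tendsto_thresholdCount t, fun i => ?_⟩
  calc ∫⁻ x, thresholdCount t (g i x) ∂μ
      ≤ ∑' j, μ {x | t j < g i x} := lintegral_thresholdCount_le t (hg i)
    _ ≤ ∑' j : ℕ, (2⁻¹ : ℝ≥0∞) ^ j := ENNReal.tsum_le_tsum fun j => ht j i
    _ = 2 := by rw [ENNReal.tsum_geometric, ENNReal.one_sub_inv_two, inv_inv]

end ThresholdCount

theorem exists_superlinear_bound_general (d m : ℕ) (Ω : Set (Fin d → ℝ))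
    (hΩb : Bornology.IsBounded Ω)
    (f : ℕ → (Fin d → ℝ) → EuclideanSpace ℝ (Fin m)) (hf : ∀ k, Measurable (f k))
    (F : (Fin d → ℝ) → EuclideanSpace ℝ (Fin m))
    (hconv : ∀ᵐ x ∂(volume.restrict Ω), Tendsto (fun k => f k x) atTop (nhds (F x))) :
    ∃ ψ₀ : ℝ → ℝ, Monotone ψ₀ ∧ (∀ s : ℝ, 0 ≤ s → 0 ≤ ψ₀ s) ∧
      Tendsto ψ₀ atTop atTop ∧
      ∃ C : ℝ≥0∞, C ≠ ⊤ ∧ ∀ k, ∫⁻ x in Ω, ENNReal.ofReal (ψ₀ ‖f k x‖) ≤ C := by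
  have : IsFiniteMeasure (volume.restrict Ω) :=
    isFiniteMeasure_restrict.2 hΩb.measure_lt_top.ne
  have hnorm : ∀ k, AEMeasurable (fun x => ‖f k x‖) (volume.restrict Ω) := fun k =>
    (hf k).norm.aemeasurable
  have hbdd : ∀ᵐ x ∂volume.restrict Ω, BddAbove (range fun k => ‖f k x‖) :=
    hconv.mono fun x hx => hx.norm.bddAbove_range
  obtain ⟨ψ, hψ_mono, hψ_tendsto, hψ_int⟩ := exists_tendsto_lintegral_le_of_uniform_tail hnorm
    fun ε hε => exists_forall_measure_setOf_lt_le_of_ae_bddAbove hnorm hbdd hε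
  refine ⟨fun s => ψ s, Nat.mono_cast.comp hψ_mono, fun s _ => Nat.cast_nonneg _,
    tendsto_natCast_atTop_atTop.comp hψ_tendsto, 2, ENNReal.ofNat_ne_top, fun k => ?_⟩
  simpa only [ENNReal.ofReal_natCast] using hψ_int k

/-- For a sequence of measurable functions converging a.e. on a bounded open set, there exists
a nondecreasing function `ψ₀` diverging at `+∞` such that `∫_Ω ψ₀(|f_k|)` is uniformly
bounded. -/
theorem exists_superlinear_bound (d m : ℕ) (Ω : Set (Fin d → ℝ))
    (hΩo : IsOpen Ω) (hΩb : Bornology.IsBounded Ω)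
    (f : ℕ → (Fin d → ℝ) → EuclideanSpace ℝ (Fin m)) (hf : ∀ k, Measurable (f k))
    (F : (Fin d → ℝ) → EuclideanSpace ℝ (Fin m))
    (hconv : ∀ᵐ x ∂(volume.restrict Ω), Tendsto (fun k => f k x) atTop (nhds (F x))) :
    ∃ ψ₀ : ℝ → ℝ, Monotone ψ₀ ∧ (∀ s : ℝ, 0 ≤ s → 0 ≤ ψ₀ s) ∧
      Tendsto ψ₀ atTop atTop ∧
      ∃ C : ℝ≥0∞, C ≠ ⊤ ∧ ∀ k, ∫⁻ x in Ω, ENNReal.ofReal (ψ₀ ‖f k x‖) ≤ C :=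
  exists_superlinear_bound_general d m Ω hΩb f hf F hconv
end

section
/- Let $d \ge 1$ and let $z_0, z_1, \dots, z_d \in \mathbb{R}^d$ with $z_i = z_0 + t_* e_i$ for $i = 1, \dots, d$, where $t_* > 0$ and $(e_i)$ is the standard basis. Let $a : \mathbb{R}^d \to \mathbb{R}^d$ be the unique affine map interpolating prescribed values at $z_0, \dots, z_d$. If for all $0 \le i < j \le d$ one has $|(a(z_i) - a(z_j)) \cdot \xi_{i,j}| \le M$, where $\xi_{i,j} = (z_i - z_j)/|z_i - z_j|$, then the symmetric part $e(a) = (\nabla a + \nabla a^T)/2$ of the gradient of $a$ satisfies $|e(a)| \le C M / t_*$ for a constant $C$ depending only on $d$. -/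
open MeasureTheory
open scoped RealInnerProductSpace

set_option maxHeartbeats 2000000 in
/-- If an affine map `a(x) = f(x) + b` has differences of its values at the simplex vertices
`z₀, z₀ + t⋆e₁, …, z₀ + t⋆e_d`, projected on the directions of the edges, bounded by `M`,
then the symmetric part of its gradient is bounded by `C M / t⋆`, with `C = C(d)`. -/
theorem affine_symmetric_gradient_bound (d : ℕ) (hd : 1 ≤ d) :
    ∃ C : ℝ, 0 < C ∧
      ∀ (tstar M : ℝ), 0 < tstar →
        ∀ (f : EuclideanSpace ℝ (Fin d) →L[ℝ] EuclideanSpace ℝ (Fin d))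
          (b z₀ : EuclideanSpace ℝ (Fin d)) (z : Fin (d + 1) → EuclideanSpace ℝ (Fin d)),
          z 0 = z₀ →
          (∀ i : Fin d, z i.succ = z₀ + tstar • EuclideanSpace.single i 1) →
          (∀ i j : Fin (d + 1), i ≠ j →
            |⟪(f (z i) + b) - (f (z j) + b), (‖z i - z j‖)⁻¹ • (z i - z j)⟫| ≤ M) →
          ‖((1 : ℝ) / 2) • (f + ContinuousLinearMap.adjoint f)‖ ≤ C * M / tstar := by
  refine ⟨2 * (d : ℝ) ^ 2, by positivity, ?_⟩
  intro tstar M ht f b z₀ z hz0 hz hbound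
  have hd1 : (1 : ℝ) ≤ (d : ℝ) := by exact_mod_cast hd
  set e : Fin d → EuclideanSpace ℝ (Fin d) := fun i => EuclideanSpace.single i 1 with he
  have i0 : Fin d := ⟨0, hd⟩
  have hMnn : 0 ≤ M := le_trans (abs_nonneg _) (hbound i0.succ 0 (Fin.succ_ne_zero i0))
  have hMt : 0 ≤ M / tstar := by positivity
  have hne : ∀ i : Fin d, ‖e i‖ = 1 := by
    intro i; simp [he, EuclideanSpace.norm_single]
  have hinner0 : ∀ i j : Fin d, i ≠ j → ⟪e i, e j⟫ = 0 := by
    intro i j hij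
    simp [he, EuclideanSpace.inner_single_left, EuclideanSpace.single_apply, Ne.symm hij]
  have hdiff : ∀ i j : Fin (d+1), f (z i) + b - (f (z j) + b) = f (z i - z j) := by
    intro i j; rw [map_sub]; abel
  have hzdiff : ∀ i : Fin d, z i.succ - z 0 = tstar • e i := by
    intro i; rw [hz, hz0]; abel
  have hzz : ∀ i j : Fin d, z i.succ - z j.succ = tstar • (e i - e j) := by
    intro i j; rw [hz, hz, smul_sub]; abel
  -- diagonal bound
  have hdiag : ∀ i : Fin d, |⟪f (e i), e i⟫| ≤ M / tstar := by
    intro i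
    have h := hbound i.succ 0 (Fin.succ_ne_zero i)
    rw [hdiff, hzdiff] at h
    have hn : ‖tstar • e i‖ = tstar := by
      rw [norm_smul, hne, Real.norm_eq_abs, abs_of_pos ht, mul_one]
    rw [hn, smul_smul, inv_mul_cancel₀ ht.ne', one_smul, f.map_smul,
      real_inner_smul_left, abs_mul, abs_of_pos ht] at h
    rw [le_div_iff₀ ht]
    linarith [h]
  -- cross bound
  have hcross : ∀ i j : Fin d, i ≠ j →
      |⟪f (e i - e j), e i - e j⟫| ≤ Real.sqrt 2 * M / tstar := by
    intro i j hij
    have hsucc : i.succ ≠ j.succ := fun h => hij (Fin.succ_injective _ h)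
    have h := hbound i.succ j.succ hsucc
    rw [hdiff, hzz] at h
    have hnd : ‖e i - e j‖ = Real.sqrt 2 := by
      have hsq : ‖e i - e j‖ ^ 2 = 2 := by
        rw [norm_sub_sq_real, hne, hne, hinner0 i j hij]; ring
      rw [← hsq, Real.sqrt_sq (norm_nonneg _)]
    have hn : ‖tstar • (e i - e j)‖ = tstar * Real.sqrt 2 := by
      rw [norm_smul, hnd, Real.norm_eq_abs, abs_of_pos ht]
    have hs2 : (0:ℝ) < Real.sqrt 2 := by positivity
    have hdir : (tstar * Real.sqrt 2)⁻¹ • tstar • (e i - e j)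
        = (Real.sqrt 2)⁻¹ • (e i - e j) := by
      rw [smul_smul]; congr 1; field_simp
    rw [hn, hdir, f.map_smul, real_inner_smul_left, real_inner_smul_right, abs_mul, abs_mul,
      abs_of_pos ht, abs_of_pos (inv_pos.2 hs2)] at h
    set X := ⟪f (e i - e j), e i - e j⟫ with hX
    have h' : tstar * |X| ≤ Real.sqrt 2 * M := by
      have h2 := mul_le_mul_of_nonneg_left h hs2.le
      calc tstar * |X| = Real.sqrt 2 * (tstar * ((Real.sqrt 2)⁻¹ * |X|)) := by
            field_simp
        _ ≤ Real.sqrt 2 * M := h2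
    rw [le_div_iff₀ ht]; linarith
  -- symmetric part and entries
  set S := ((1 : ℝ) / 2) • (f + ContinuousLinearMap.adjoint f) with hS
  set B := 2 * (M / tstar) with hB
  have hBnn : 0 ≤ B := by positivity
  have hSapp : ∀ x y : EuclideanSpace ℝ (Fin d),
      ⟪S x, y⟫ = (1/2) * (⟪f x, y⟫ + ⟪f y, x⟫) := by
    intro x y
    rw [hS]
    simp only [ContinuousLinearMap.smul_apply, ContinuousLinearMap.add_apply]
    rw [real_inner_smul_left, inner_add_left, ContinuousLinearMap.adjoint_inner_left]
    rw [real_inner_comm x (f y)]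
  have hE : ∀ k l : Fin d, |⟪S (e k), e l⟫| ≤ B := by
    intro k l
    by_cases hkl : k = l
    · subst hkl
      rw [hSapp]
      have heq : (1:ℝ)/2 * (⟪f (e k), e k⟫ + ⟪f (e k), e k⟫) = ⟪f (e k), e k⟫ := by ring
      rw [heq, hB]
      linarith [hdiag k]
    · have hexp : ⟪f (e k - e l), e k - e l⟫
          = ⟪f (e k), e k⟫ + ⟪f (e l), e l⟫ - (⟪f (e k), e l⟫ + ⟪f (e l), e k⟫) := by
        rw [map_sub, inner_sub_left, inner_sub_right, inner_sub_right]; ring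
      have h1 := hdiag k
      have h2 := hdiag l
      have hs2 : Real.sqrt 2 ≤ 2 := by
        nlinarith [Real.sq_sqrt (show (0:ℝ) ≤ 2 by norm_num), Real.sqrt_nonneg 2]
      have h3 : |⟪f (e k - e l), e k - e l⟫| ≤ 2 * (M / tstar) := by
        calc |⟪f (e k - e l), e k - e l⟫| ≤ Real.sqrt 2 * M / tstar := hcross k l hkl
          _ = Real.sqrt 2 * (M / tstar) := by rw [mul_div_assoc]
          _ ≤ 2 * (M / tstar) := mul_le_mul_of_nonneg_right hs2 hMt
      rw [hSapp]
      have heq : (1:ℝ)/2 * (⟪f (e k), e l⟫ + ⟪f (e l), e k⟫)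
          = (1:ℝ)/2 * (⟪f (e k), e k⟫ + ⟪f (e l), e l⟫ - ⟪f (e k - e l), e k - e l⟫) := by
        rw [hexp]; ring
      rw [heq, hB, abs_mul]
      have habs : |⟪f (e k), e k⟫ + ⟪f (e l), e l⟫ - ⟪f (e k - e l), e k - e l⟫|
          ≤ |⟪f (e k), e k⟫| + |⟪f (e l), e l⟫| + |⟪f (e k - e l), e k - e l⟫| := by
        calc _ ≤ |⟪f (e k), e k⟫ + ⟪f (e l), e l⟫| + |⟪f (e k - e l), e k - e l⟫| :=
              abs_sub _ _
          _ ≤ _ := by linarith [abs_add_le (⟪f (e k), e k⟫) (⟪f (e l), e l⟫)]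
      have h12 : |(1:ℝ)/2| = 1/2 := by norm_num
      rw [h12]
      linarith
  -- coordinates via inner products
  have hcoord : ∀ (y : EuclideanSpace ℝ (Fin d)) (l : Fin d), y l = ⟪e l, y⟫ := by
    intro y l
    rw [he]
    simp [EuclideanSpace.inner_single_left]
  -- column bound
  have hcol : ∀ k : Fin d, ‖S (e k)‖ ≤ Real.sqrt d * B := by
    intro k
    rw [EuclideanSpace.norm_eq]
    have hsum : (∑ l : Fin d, ‖(S (e k)) l‖ ^ 2) ≤ (d : ℝ) * B ^ 2 := by
      calc (∑ l : Fin d, ‖(S (e k)) l‖ ^ 2) ≤ ∑ _l : Fin d, B ^ 2 := by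
            refine Finset.sum_le_sum fun l _ => ?_
            have hcl : ‖(S (e k)) l‖ = |⟪S (e k), e l⟫| := by
              rw [hcoord (S (e k)) l, Real.norm_eq_abs, real_inner_comm]
            rw [hcl]
            exact pow_le_pow_left₀ (abs_nonneg _) (hE k l) 2
        _ = (d : ℝ) * B ^ 2 := by simp [Finset.sum_const]
    calc Real.sqrt (∑ l : Fin d, ‖(S (e k)) l‖ ^ 2) ≤ Real.sqrt ((d:ℝ) * B ^ 2) :=
          Real.sqrt_le_sqrt hsum
      _ = Real.sqrt d * B := by
          rw [Real.sqrt_mul (by positivity), Real.sqrt_sq hBnn]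
  -- decomposition
  have hdecomp : ∀ x : EuclideanSpace ℝ (Fin d), x = ∑ k : Fin d, x k • e k := by
    intro x
    have h := (EuclideanSpace.basisFun (Fin d) ℝ).sum_repr x
    rw [he]
    simpa [EuclideanSpace.basisFun_apply, EuclideanSpace.basisFun_repr] using h.symm
  have hsqd : Real.sqrt d ≤ (d : ℝ) := by
    nlinarith [Real.sq_sqrt (show (0:ℝ) ≤ (d:ℝ) by positivity), Real.sqrt_nonneg (d:ℝ)]
  refine ContinuousLinearMap.opNorm_le_bound _ (by positivity) fun x => ?_
  have hxk : ∀ k : Fin d, |x k| ≤ ‖x‖ := by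
    intro k
    rw [hcoord x k]
    calc |⟪e k, x⟫| ≤ ‖e k‖ * ‖x‖ := abs_real_inner_le_norm _ _
      _ = ‖x‖ := by rw [hne, one_mul]
  have hSx : S x = ∑ k : Fin d, x k • S (e k) := by
    conv_lhs => rw [hdecomp x]
    rw [map_sum]
    exact Finset.sum_congr rfl fun k _ => S.map_smul _ _
  have hfin : 2 * (d:ℝ)^2 * M / tstar * ‖x‖ = (d:ℝ)^2 * B * ‖x‖ := by
    rw [hB]; ring
  calc ‖S x‖ = ‖∑ k : Fin d, x k • S (e k)‖ := by rw [hSx]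
    _ ≤ ∑ k : Fin d, ‖x k • S (e k)‖ := norm_sum_le _ _
    _ ≤ ∑ _k : Fin d, ‖x‖ * (Real.sqrt d * B) := by
        refine Finset.sum_le_sum fun k _ => ?_
        rw [norm_smul, Real.norm_eq_abs]
        exact mul_le_mul (hxk k) (hcol k) (norm_nonneg _) (norm_nonneg _)
    _ = (d : ℝ) * (‖x‖ * (Real.sqrt d * B)) := by simp [Finset.sum_const]
    _ ≤ 2 * (d:ℝ)^2 * M / tstar * ‖x‖ := by
        rw [hfin]
        have hxnn : (0:ℝ) ≤ ‖x‖ := norm_nonneg x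
        nlinarith [mul_nonneg (mul_nonneg (mul_nonneg (by positivity : (0:ℝ) ≤ (d:ℝ)) hBnn) hxnn) (sub_nonneg.2 hsqd)]
end

section
/- Let $\Omega \subset \mathbb{R}^d$ be open and bounded with finite Lebesgue measure, and let $(f_k)_k$ be measurable functions $\Omega \to \mathbb{R}$. Suppose that for every $j \in \mathbb{N}$ there exist measurable sets $E_k^j \subset \Omega$ with $\sup_k |E_k^j| \le \eta_j$ and functions $g_k^j$ converging in $L^1(\Omega)$ as $k \to \infty$, such that $\int_{\Omega \setminus E_k^j} |f_k - g_k^j|\,dx \le C_j$, where $\eta_j \to 0$ and $C_j \to 0$ as $j \to \infty$, and suppose $|f_k| \le \sigma$ uniformly. Then $(f_k)_k$ is a Cauchy sequence in $L^1(\Omega)$. -/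
/-!
Fix a scale `j` and let `G` be the `L¹`-limit of `g j ·`. Outside `E j k ∪ E j l`, going from
`f k` to `f l` through `g j k`, `G` and `g j l` bounds `∫ |f k - f l|` by `2 C j` plus two terms
that vanish as `k, l → ∞`; on `E j k ∪ E j l`, a set of measure at most `2 η j`, the integrand is
at most `2σ`. Hence `limsup_{k,l} ∫ |f k - f l| ≤ 2 C j + 4 σ η j` for every `j`, and `j → ∞`
gives the Cauchy property.
-/

open MeasureTheory Filter Topology

theorem tendsto_zero_of_le_add_of_tendsto {β : Type*} {l : Filter β} {a : β → ℝ} {b : ℕ → ℝ}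
    (ha : ∀ p, 0 ≤ a p) (hb : Tendsto b atTop (𝓝 0))
    (hab : ∀ j, ∃ c : β → ℝ, Tendsto c l (𝓝 0) ∧ ∀ p, a p ≤ b j + c p) :
    Tendsto a l (𝓝 0) := by
  rw [Metric.tendsto_nhds]
  intro ε hε
  obtain ⟨j, hj⟩ := Metric.tendsto_atTop.mp hb (ε / 2) (half_pos hε)
  replace hj := hj j le_rfl
  obtain ⟨c, hc, hac⟩ := hab j
  filter_upwards [Metric.tendsto_nhds.mp hc (ε / 2) (half_pos hε)] with p hp
  rw [Real.dist_eq, sub_zero] at hj hp ⊢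
  rw [abs_of_nonneg (ha p)]
  linarith [hac p, le_abs_self (b j), le_abs_self (c p)]

namespace MeasureTheory

variable {α : Type*} [MeasurableSpace α] {μ : Measure α}

theorem integrable_abs_sub {u v : α → ℝ} (hu : Integrable u μ) (hv : Integrable v μ) :
    Integrable (fun x => |u x - v x|) μ :=
  (hu.sub hv).abs

theorem integral_abs_sub_le_add {u v w : α → ℝ} (hu : Integrable u μ) (hv : Integrable v μ)
    (hw : Integrable w μ) :
    ∫ x, |u x - w x| ∂μ ≤ ∫ x, |u x - v x| ∂μ + ∫ x, |w x - v x| ∂μ := by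
  rw [← integral_add (integrable_abs_sub hu hv) (integrable_abs_sub hw hv)]
  refine integral_mono (integrable_abs_sub hu hw)
    ((integrable_abs_sub hu hv).add (integrable_abs_sub hw hv)) fun x => ?_
  simpa only [abs_sub_comm (w x)] using abs_sub_le (u x) (v x) (w x)

theorem integral_abs_sub_le_of_approx [IsFiniteMeasure μ] {f₁ f₂ g₁ g₂ : α → ℝ} {E₁ E₂ : Set α}
    {M : ℝ} (hM : 0 ≤ M) (hf₁ : Integrable f₁ μ) (hf₂ : Integrable f₂ μ)
    (hg₁ : Integrable g₁ μ) (hg₂ : Integrable g₂ μ) (hfM : ∀ᵐ x ∂μ, |f₁ x - f₂ x| ≤ M)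
    (hE₁ : MeasurableSet E₁) (hE₂ : MeasurableSet E₂) :
    ∫ x, |f₁ x - f₂ x| ∂μ ≤ ∫ x in E₁ᶜ, |f₁ x - g₁ x| ∂μ + ∫ x in E₂ᶜ, |f₂ x - g₂ x| ∂μ
      + ∫ x, |g₁ x - g₂ x| ∂μ + M * (μ.real E₁ + μ.real E₂) := by
  set B := E₁ ∪ E₂
  have setIntegral_le {s t : Set α} {u v : α → ℝ} (hu : Integrable u μ) (hv : Integrable v μ)
      (hst : s ⊆ t) : ∫ x in s, |u x - v x| ∂μ ≤ ∫ x in t, |u x - v x| ∂μ :=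
    setIntegral_mono_set (integrable_abs_sub hu hv).integrableOn
      (ae_of_all _ fun _ => abs_nonneg _) hst.eventuallyLE
  have hbad : ∫ x in B, |f₁ x - f₂ x| ∂μ ≤ M * (μ.real E₁ + μ.real E₂) := calc
    _ ≤ M * μ.real B := (le_abs_self _).trans <| norm_setIntegral_le_of_norm_le_const_ae
        (f := fun x => |f₁ x - f₂ x|) (measure_lt_top μ B) <| ae_restrict_of_ae <| by
          simpa only [Real.norm_eq_abs, abs_abs] using hfM
    _ ≤ M * (μ.real E₁ + μ.real E₂) := by gcongr; exact measureReal_union_le E₁ E₂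
  have hgood : ∫ x in Bᶜ, |f₁ x - f₂ x| ∂μ ≤ ∫ x in E₁ᶜ, |f₁ x - g₁ x| ∂μ
      + ∫ x in E₂ᶜ, |f₂ x - g₂ x| ∂μ + ∫ x, |g₁ x - g₂ x| ∂μ := calc
    _ ≤ ∫ x in Bᶜ, |f₁ x - g₁ x| ∂μ + (∫ x in Bᶜ, |f₂ x - g₂ x| ∂μ
          + ∫ x in Bᶜ, |g₁ x - g₂ x| ∂μ) :=
        (integral_abs_sub_le_add hf₁.restrict hg₁.restrict hf₂.restrict).trans <|
          add_le_add_right (integral_abs_sub_le_add hf₂.restrict hg₂.restrict hg₁.restrict) _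
    _ ≤ _ := by
        rw [← add_assoc]
        refine add_le_add (add_le_add ?_ ?_) ?_
        · exact setIntegral_le hf₁ hg₁ (Set.compl_subset_compl.mpr Set.subset_union_left)
        · exact setIntegral_le hf₂ hg₂ (Set.compl_subset_compl.mpr Set.subset_union_right)
        · exact setIntegral_le_integral (integrable_abs_sub hg₁ hg₂)
            (ae_of_all _ fun _ => abs_nonneg _)
  rw [← integral_add_compl (hE₁.union hE₂) (integrable_abs_sub hf₁ hf₂)]
  linarith

theorem tendsto_integral_abs_sub_of_multiscale_approx [IsFiniteMeasure μ] {S : ℝ} (hS : 0 ≤ S)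
    {f : ℕ → α → ℝ} (hf : ∀ k, Integrable (f k) μ) (hfS : ∀ k, ∀ᵐ x ∂μ, |f k x| ≤ S)
    {η C : ℕ → ℝ} (hη : Tendsto η atTop (𝓝 0)) (hC : Tendsto C atTop (𝓝 0))
    {E : ℕ → ℕ → Set α} (hE : ∀ j k, MeasurableSet (E j k)) (hEη : ∀ j k, μ.real (E j k) ≤ η j)
    {g : ℕ → ℕ → α → ℝ} (hg : ∀ j k, Integrable (g j k) μ)
    (hgG : ∀ j, ∃ G : α → ℝ, Integrable G μ ∧
      Tendsto (fun k => ∫ x, |g j k x - G x| ∂μ) atTop (𝓝 0))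
    (hfg : ∀ j k, ∫ x in (E j k)ᶜ, |f k x - g j k x| ∂μ ≤ C j) :
    Tendsto (fun p : ℕ × ℕ => ∫ x, |f p.1 x - f p.2 x| ∂μ) (atTop ×ˢ atTop) (𝓝 0) := by
  have hb : Tendsto (fun j => 2 * C j + 2 * S * (2 * η j)) atTop (𝓝 0) := by
    simpa using (hC.const_mul 2).add ((hη.const_mul 2).const_mul (2 * S))
  refine tendsto_zero_of_le_add_of_tendsto (fun _ => integral_nonneg fun _ => abs_nonneg _) hb
    fun j => ?_
  obtain ⟨G, hG, hgG⟩ := hgG j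
  refine ⟨fun p => ∫ x, |g j p.1 x - G x| ∂μ + ∫ x, |g j p.2 x - G x| ∂μ,
    by simpa using (hgG.comp tendsto_fst).add (hgG.comp tendsto_snd), fun ⟨k, l⟩ => ?_⟩
  have hfkl : ∀ᵐ x ∂μ, |f k x - f l x| ≤ 2 * S := by
    filter_upwards [hfS k, hfS l] with x hk hl
    linarith [abs_sub (f k x) (f l x)]
  have := integral_abs_sub_le_of_approx (by positivity) (hf k) (hf l) (hg j k) (hg j l) hfkl
    (hE j k) (hE j l)
  have := integral_abs_sub_le_add (hg j k) hG (hg j l)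
  have : 2 * S * (μ.real (E j k) + μ.real (E j l)) ≤ 2 * S * (2 * η j) := by
    gcongr; linarith [hEη j k, hEη j l]
  linarith [hfg j k, hfg j l]

end MeasureTheory

theorem multiscale_cauchy_general (d : ℕ) (Ω : Set (Fin d → ℝ)) (hΩo : IsOpen Ω)
    (hΩfin : volume Ω < ⊤)
    (σ : ℝ) (f : ℕ → (Fin d → ℝ) → ℝ) (hfmeas : ∀ k, Measurable (f k))
    (hfbd : ∀ k x, x ∈ Ω → |f k x| ≤ σ)
    (η C : ℕ → ℝ) (hη : Tendsto η atTop (nhds 0)) (hC : Tendsto C atTop (nhds 0))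
    (E : ℕ → ℕ → Set (Fin d → ℝ)) (hEmeas : ∀ j k, MeasurableSet (E j k))
    (hEvol : ∀ j k, volume (E j k) ≤ ENNReal.ofReal (η j))
    (g : ℕ → ℕ → (Fin d → ℝ) → ℝ) (hgint : ∀ j k, IntegrableOn (g j k) Ω)
    (hgconv : ∀ j, ∃ G : (Fin d → ℝ) → ℝ, IntegrableOn G Ω ∧
      Tendsto (fun k => ∫ x in Ω, |g j k x - G x|) atTop (nhds 0))
    (hclose : ∀ j k, ∫ x in Ω \ E j k, |f k x - g j k x| ≤ C j) :
    ∀ ε : ℝ, 0 < ε → ∃ K : ℕ, ∀ k ≥ K, ∀ l ≥ K,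
      ∫ x in Ω, |f k x - f l x| ≤ ε := by
  have : IsFiniteMeasure (volume.restrict Ω) := isFiniteMeasure_restrict.2 hΩfin.ne
  have hfσ k : ∀ᵐ x ∂volume.restrict Ω, |f k x| ≤ max σ 0 :=
    (ae_restrict_of_forall_mem hΩo.measurableSet (hfbd k)).mono fun _ h =>
      h.trans (le_max_left _ _)
  have hf k : IntegrableOn (f k) Ω :=
    Integrable.of_bound (hfmeas k).aestronglyMeasurable _ <| by
      simpa only [Real.norm_eq_abs] using hfσ k
  have hEη j k : (volume.restrict Ω).real (E j k) ≤ max (η j) 0 := by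
    rw [← ENNReal.toReal_ofReal']
    exact ENNReal.toReal_mono ENNReal.ofReal_ne_top
      ((Measure.restrict_apply_le _ _).trans (hEvol j k))
  have hfg j k : ∫ x in (E j k)ᶜ, |f k x - g j k x| ∂volume.restrict Ω ≤ C j := by
    rw [Measure.restrict_restrict (hEmeas j k).compl, Set.inter_comm, ← Set.sdiff_eq]
    exact hclose j k
  have hcauchy := tendsto_integral_abs_sub_of_multiscale_approx (le_max_right σ 0) hf hfσ
    (by simpa using hη.max (tendsto_const_nhds (x := 0))) hC hEmeas hEη hgint hgconv hfg
  rw [prod_atTop_atTop_eq] at hcauchy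
  intro ε hε
  exact eventually_atTop_prod_self'.mp (hcauchy.eventually (ge_mem_nhds hε))

/-- Multiscale Cauchy estimate: a uniformly bounded sequence which, at every scale `j`, is
`L¹`-close (outside exceptional sets of small measure) to a sequence converging in `L¹`, is
itself Cauchy in `L¹(Ω)`. -/
theorem multiscale_cauchy (d : ℕ) (Ω : Set (Fin d → ℝ)) (hΩo : IsOpen Ω)
    (hΩb : Bornology.IsBounded Ω) (hΩfin : volume Ω < ⊤)
    (σ : ℝ) (f : ℕ → (Fin d → ℝ) → ℝ) (hfmeas : ∀ k, Measurable (f k))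
    (hfbd : ∀ k x, x ∈ Ω → |f k x| ≤ σ)
    (η C : ℕ → ℝ) (hη : Tendsto η atTop (nhds 0)) (hC : Tendsto C atTop (nhds 0))
    (E : ℕ → ℕ → Set (Fin d → ℝ)) (hEmeas : ∀ j k, MeasurableSet (E j k))
    (hEsub : ∀ j k, E j k ⊆ Ω) (hEvol : ∀ j k, volume (E j k) ≤ ENNReal.ofReal (η j))
    (g : ℕ → ℕ → (Fin d → ℝ) → ℝ) (hgint : ∀ j k, IntegrableOn (g j k) Ω)
    (hgconv : ∀ j, ∃ G : (Fin d → ℝ) → ℝ, IntegrableOn G Ω ∧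
      Tendsto (fun k => ∫ x in Ω, |g j k x - G x|) atTop (nhds 0))
    (hclose : ∀ j k, ∫ x in Ω \ E j k, |f k x - g j k x| ≤ C j) :
    ∀ ε : ℝ, 0 < ε → ∃ K : ℕ, ∀ k ≥ K, ∀ l ≥ K,
      ∫ x in Ω, |f k x - f l x| ≤ ε :=
  multiscale_cauchy_general d Ω hΩo hΩfin σ f hfmeas hfbd η C hη hC E hEmeas hEvol g hgint hgconv
    hclose
end

section
/- Let $u : Q \to \mathbb{R}^d$ be measurable on the unit cube $Q = (-1/2,1/2)^d$, and let $J \subset Q$ be a countably $(d-1)$-rectifiable set with $\mathcal{H}^{d-1}(J) < \infty$. Define $T(x, \xi, t) = 1$ if $x \in Q$, $x + t\xi \in Q$, and the segment $[x, x+t\xi]$ meets $J$, and $T = 0$ otherwise. Then for every $\xi \in \mathbb{S}^{d-1}$, $\int_{\mathbb{R}^d} \int_{\mathbb{R}} T(x, \xi, t)\,dt\,dx \le 4d\,\mathcal{H}^{d-1}(J)$. -/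
open MeasureTheory Filter Metric
open scoped ENNReal

/-- `J` is countably `(d-1)`-rectifiable: covered, up to an `ℋ^{d-1}`-null set, by countably
many Lipschitz images of `ℝ^{d-1}`. -/
def CountablyRectifiable (d : ℕ) (J : Set (EuclideanSpace ℝ (Fin d))) : Prop :=
  ∃ f : ℕ → EuclideanSpace ℝ (Fin (d - 1)) → EuclideanSpace ℝ (Fin d),
    (∀ n, ∃ K : NNReal, LipschitzWith K (f n)) ∧
    μH[(d : ℝ) - 1] (J \ ⋃ n, Set.range (f n)) = 0

/-!
If `x` and `x + tξ` both lie in the unit cube then `|t| ≤ √d`, and the `t`-section is nonempty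
only when `x` lies in the ball of radius `√d / 2` and the line `x + ℝξ` meets `J`. After rotating
`ξ` onto a coordinate axis, this set of `x` lies in a slab of width `√d` over the shadow of `J` in
the remaining `d - 1` coordinates. Measured with the sup metric, the shadow is a 1-Lipschitz image
of `J` in a space where `μH[d - 1]` is Lebesgue measure, so its volume is at most `ℋ^{d-1}(J)`.
Altogether the integral is at most `2√d · √d · ℋ^{d-1}(J) = 2d ℋ^{d-1}(J)`.
-/

def lineSweep {E : Type*} [AddCommGroup E] [Module ℝ E] (J : Set E) (ξ : E) : Set E :=
  {x | ∃ s : ℝ, x + s • ξ ∈ J}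

theorem exists_linearIsometryEquiv_apply_eq {E : Type*} [NormedAddCommGroup E]
    [InnerProductSpace ℝ E] {v w : E} (h : ‖v‖ = ‖w‖) :
    ∃ f : E ≃ₗᵢ[ℝ] E, f v = w :=
  ⟨_, Submodule.reflection_sub h⟩

theorem EuclideanSpace.norm_le_sqrt_card_mul {ι : Type*} [Fintype ι] {x : EuclideanSpace ℝ ι}
    {c : ℝ} (hc : 0 ≤ c) (h : ∀ i, |x i| ≤ c) : ‖x‖ ≤ √(Fintype.card ι) * c := by
  rw [EuclideanSpace.norm_eq, ← Real.sqrt_sq hc, ← Real.sqrt_mul (Nat.cast_nonneg _)]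
  gcongr
  calc ∑ i, ‖x i‖ ^ 2 ≤ ∑ _i : ι, c ^ 2 := by
        gcongr with i
        exact h i
    _ = _ := by simp

theorem volume_closedBall_inter_lineSweep_single_le {n : ℕ} (i : Fin (n + 1))
    (J : Set (EuclideanSpace ℝ (Fin (n + 1)))) (R : ℝ) :
    volume (closedBall 0 R ∩ lineSweep J (EuclideanSpace.single i 1)) ≤
      ENNReal.ofReal (2 * R) * μH[n] J := by
  let e := (MeasurableEquiv.toLp 2 (Fin (n + 1) → ℝ)).symm.trans
    (MeasurableEquiv.piFinSuccAbove (fun _ => ℝ) i)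
  have he : MeasurePreserving e :=
    (PiLp.volume_preserving_ofLp _).trans (volume_preserving_piFinSuccAbove _ i)
  set shadow : EuclideanSpace ℝ (Fin (n + 1)) → Fin n → ℝ := fun x => (e x).2
  have hshadow : LipschitzWith 1 shadow :=
    .of_dist_le_mul fun x y => by
      simpa [shadow, e, Fin.removeNth, dist_pi_le_iff dist_nonneg] using
        fun j => PiLp.dist_apply_le x y (i.succAbove j)
  have hsub : closedBall 0 R ∩ lineSweep J (EuclideanSpace.single i 1) ⊆
      e ⁻¹' (Set.Icc (-R) R ×ˢ (shadow '' J)) := by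
    rintro x ⟨hx, s, hs⟩
    refine ⟨abs_le.1 ((PiLp.norm_apply_le x i).trans (mem_closedBall_zero_iff.1 hx)), _, hs, ?_⟩
    ext j
    simp [shadow, e, Fin.removeNth]
  have hvol : (μH[n] : Measure (Fin n → ℝ)) = volume := by
    simpa using hausdorffMeasure_pi_real (ι := Fin n)
  calc volume (closedBall 0 R ∩ lineSweep J (EuclideanSpace.single i 1))
      ≤ volume (e ⁻¹' (Set.Icc (-R) R ×ˢ (shadow '' J))) := measure_mono hsub
    _ = ENNReal.ofReal (2 * R) * μH[n] (shadow '' J) := by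
      rw [he.measure_preimage_equiv, Measure.volume_eq_prod, Measure.prod_prod, Real.volume_Icc,
        hvol, sub_neg_eq_add, ← two_mul]
    _ ≤ ENNReal.ofReal (2 * R) * μH[n] J := by
      gcongr
      simpa using hshadow.hausdorffMeasure_image_le (Nat.cast_nonneg n) J

theorem volume_closedBall_inter_lineSweep_le {n : ℕ} (J : Set (EuclideanSpace ℝ (Fin (n + 1))))
    {ξ : EuclideanSpace ℝ (Fin (n + 1))} (hξ : ‖ξ‖ = 1) (R : ℝ) :
    volume (closedBall 0 R ∩ lineSweep J ξ) ≤ ENNReal.ofReal (2 * R) * μH[n] J := by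
  obtain ⟨f, hf⟩ := exists_linearIsometryEquiv_apply_eq
    (v := EuclideanSpace.single (0 : Fin (n + 1)) (1 : ℝ)) (w := ξ) (by simp [hξ])
  have hpre : f ⁻¹' (closedBall 0 R ∩ lineSweep J ξ) =
      closedBall 0 R ∩ lineSweep (f ⁻¹' J) (EuclideanSpace.single 0 1) := by
    ext x
    simp [lineSweep, ← hf]
  calc volume (closedBall 0 R ∩ lineSweep J ξ)
      = volume (f ⁻¹' (closedBall 0 R ∩ lineSweep J ξ)) :=
        (MeasurePreserving.measure_preimage_equiv (f := f.toMeasurableEquiv)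
          f.measurePreserving _).symm
    _ ≤ ENNReal.ofReal (2 * R) * μH[n] (f ⁻¹' J) :=
        hpre ▸ volume_closedBall_inter_lineSweep_single_le 0 _ R
    _ = ENNReal.ofReal (2 * R) * μH[n] J := by
      congr 1
      exact f.toIsometryEquiv.hausdorffMeasure_preimage _ J

def unitCube (d : ℕ) : Set (EuclideanSpace ℝ (Fin d)) :=
  {x | ∀ i, x i ∈ Set.Ioo (-(1 : ℝ) / 2) (1 / 2)}

section unitCube

variable {d : ℕ} {x y : EuclideanSpace ℝ (Fin d)}

theorem norm_le_of_mem_unitCube (hx : x ∈ unitCube d) : ‖x‖ ≤ √d / 2 := by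
  have := EuclideanSpace.norm_le_sqrt_card_mul (x := x) (c := 1 / 2) (by norm_num)
    fun i => abs_le.2 ⟨by linarith [(hx i).1], (hx i).2.le⟩
  simpa [div_eq_mul_inv] using this

theorem norm_sub_le_of_mem_unitCube (hx : x ∈ unitCube d) (hy : y ∈ unitCube d) :
    ‖y - x‖ ≤ √d := by
  have := EuclideanSpace.norm_le_sqrt_card_mul (x := y - x) zero_le_one fun i => by
    rw [PiLp.sub_apply, abs_le]
    constructor <;> linarith [(hx i).1, (hx i).2, (hy i).1, (hy i).2]
  simpa using this

end unitCube

theorem volume_setOf_segment_mem_unitCube_le {d : ℕ} (J : Set (EuclideanSpace ℝ (Fin d)))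
    {ξ : EuclideanSpace ℝ (Fin d)} (hξ : ‖ξ‖ = 1) (x : EuclideanSpace ℝ (Fin d)) :
    volume {t : ℝ | x ∈ unitCube d ∧ x + t • ξ ∈ unitCube d ∧
        ∃ s ∈ Set.uIcc (0 : ℝ) t, x + s • ξ ∈ J} ≤
      (closedBall 0 (√d / 2) ∩ lineSweep J ξ).indicator (fun _ => ENNReal.ofReal (2 * √d)) x := by
  by_cases hx : x ∈ closedBall 0 (√d / 2) ∩ lineSweep J ξ
  · rw [Set.indicator_of_mem hx]
    calc volume {t : ℝ | x ∈ unitCube d ∧ x + t • ξ ∈ unitCube d ∧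
          ∃ s ∈ Set.uIcc (0 : ℝ) t, x + s • ξ ∈ J}
        ≤ volume (Set.Icc (-√d) √d) := by
          refine measure_mono fun t ⟨hx, hxt, _⟩ => abs_le.1 ?_
          simpa [norm_smul, hξ] using norm_sub_le_of_mem_unitCube hx hxt
      _ = ENNReal.ofReal (2 * √d) := by rw [Real.volume_Icc, sub_neg_eq_add, two_mul]
  · rw [Set.indicator_of_notMem hx, nonpos_iff_eq_zero]
    refine measure_mono_null (fun t ⟨hx₀, _, s, _, hs⟩ => ?_) measure_empty
    exact hx ⟨mem_closedBall_zero_iff.2 (norm_le_of_mem_unitCube hx₀), s, hs⟩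

theorem segment_crossing_estimate_general (d : ℕ) (hd : 1 ≤ d)
    (J : Set (EuclideanSpace ℝ (Fin d)))
    (ξ : EuclideanSpace ℝ (Fin d)) (hξ : ‖ξ‖ = 1) :
    ∫⁻ x : EuclideanSpace ℝ (Fin d),
        volume {t : ℝ |
          (∀ i, x i ∈ Set.Ioo (-(1:ℝ)/2) (1/2)) ∧
          (∀ i, (x + t • ξ) i ∈ Set.Ioo (-(1:ℝ)/2) (1/2)) ∧
          ∃ s ∈ Set.uIcc (0:ℝ) t, x + s • ξ ∈ J}
      ≤ (4 * d : ℝ≥0∞) * μH[(d : ℝ) - 1] J := by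
  obtain ⟨n, rfl⟩ := Nat.exists_eq_add_of_le' hd
  have hdim : ((n + 1 : ℕ) : ℝ) - 1 = n := by push_cast; ring
  set r := √(n + 1 : ℕ)
  set C := closedBall 0 (r / 2) ∩ lineSweep J ξ
  have hr : 2 * r * (2 * (r / 2)) = 2 * (n + 1 : ℕ) := by
    rw [mul_div_cancel₀ _ two_ne_zero, mul_assoc, Real.mul_self_sqrt (Nat.cast_nonneg _)]
  calc _ ≤ ∫⁻ x, C.indicator (fun _ => ENNReal.ofReal (2 * r)) x :=
        lintegral_mono (volume_setOf_segment_mem_unitCube_le J hξ)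
    _ ≤ ENNReal.ofReal (2 * r) * volume C := lintegral_indicator_const_le C _
    _ ≤ ENNReal.ofReal (2 * r) * (ENNReal.ofReal (2 * (r / 2)) * μH[n] J) := by
        gcongr
        exact volume_closedBall_inter_lineSweep_le J hξ _
    _ = (2 * (n + 1 : ℕ) : ℝ≥0∞) * μH[n] J := by
        rw [← mul_assoc, ← ENNReal.ofReal_mul (by positivity), hr, ENNReal.ofReal_mul zero_le_two,
          ENNReal.ofReal_natCast, ENNReal.ofReal_ofNat]
    _ ≤ (4 * (n + 1 : ℕ) : ℝ≥0∞) * μH[((n + 1 : ℕ) : ℝ) - 1] J := by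
        rw [hdim]
        gcongr
        norm_num

/-- Key slicing estimate: the measure of pairs `(x,t)` such that the segment from `x` to
`x + tξ` stays relevant to the unit cube and meets the rectifiable set `J` is controlled by
`4d ℋ^{d-1}(J)`. -/
theorem segment_crossing_estimate (d : ℕ) (hd : 1 ≤ d)
    (u : EuclideanSpace ℝ (Fin d) → EuclideanSpace ℝ (Fin d)) (hu : Measurable u)
    (J : Set (EuclideanSpace ℝ (Fin d))) (hJmeas : MeasurableSet J)
    (hJrect : CountablyRectifiable d J)
    (hJsub : J ⊆ {x : EuclideanSpace ℝ (Fin d) | ∀ i, x i ∈ Set.Ioo (-(1:ℝ)/2) (1/2)})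
    (hJfin : μH[(d : ℝ) - 1] J < ⊤)
    (ξ : EuclideanSpace ℝ (Fin d)) (hξ : ‖ξ‖ = 1) :
    ∫⁻ x : EuclideanSpace ℝ (Fin d),
        volume {t : ℝ |
          (∀ i, x i ∈ Set.Ioo (-(1:ℝ)/2) (1/2)) ∧
          (∀ i, (x + t • ξ) i ∈ Set.Ioo (-(1:ℝ)/2) (1/2)) ∧
          ∃ s ∈ Set.uIcc (0:ℝ) t, x + s • ξ ∈ J}
      ≤ (4 * d : ℝ≥0∞) * μH[(d : ℝ) - 1] J :=
  segment_crossing_estimate_general d hd J ξ hξ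
end
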